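/- (Corollary 1: Youla-like parametrization of all sparse stabilizing controllers.) Let (M, N, M̃, Ñ, X, Y, X̃, Ỹ) be a DCF of the strictly proper plant G ∈ F^{m×p} over Ω, let the sparsity subspace S defined by K^bin be QI under G, and suppose Q₀ ∈ 𝔸^{p×m} is stable and satisfies (X̃·M̃ + M·Q₀·M̃) i j = 0 for every (i,j) with K^bin i j = false. Then a controller K ∈ F^{p×m} stabilizes G and belongs to S if and only if K = K_{Q₀ + Q_δ} for some stable Q_δ ∈ 𝔸^{p×m} satisfying (M·Q_δ·M̃) i j = 0 for every (i,j) with K^bin i j = false. -/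

import Mathlib

/-!
Shifting the Bézout identity by `[[1, Q], [0, 1]]` turns a doubly coprime factorization into
another one for every stable `Q`, so `K_Q = Y_Q⁻¹ X_Q` stabilizes `G` with
`K_Q (1 + G K_Q)⁻¹ = X̃_Q M̃`; conversely every stabilizing controller is some `K_Q`. `Y_Q` is
invertible because `M Y_Q = 1 - (M X_Q) G` is a strictly proper perturbation of the identity, whose
determinant is `1` modulo the ideal of strictly proper functions inside the proper ones.
Quadratic invariance makes `K ∈ S` equivalent to `K (1 + G K)⁻¹ ∈ S`: polarization gives
`K (G K)ⁿ ∈ S`, and `(1 + G K)⁻¹` is a polynomial in `G K`. So `K_{Q₀ + Q_δ} ∈ S` iff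
`X̃ M̃ + M Q₀ M̃ + M Q_δ M̃ ∈ S`, iff `M Q_δ M̃ ∈ S`.
-/

open Matrix

noncomputable section

/-- The field of real rational functions. -/
abbrev F : Type := RatFunc ℝ

/-- A rational function is stable (w.r.t. stability region `Ω`) if it is proper and
every complex root of the complexification of its reduced denominator lies in `Ω`. -/
def StableF (Ω : Set ℂ) (f : F) : Prop :=
  f.intDegree ≤ 0 ∧ ∀ z : ℂ, (f.denom.map (algebraMap ℝ ℂ)).IsRoot z → z ∈ Ω

/-- A matrix over `F` is stable if all its entries are stable. -/
def MatStable (Ω : Set ℂ) {a b : Type} (M : Matrix a b F) : Prop :=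
  ∀ i j, StableF Ω (M i j)

/-- A matrix over `F` is strictly proper if every entry is `0` or has negative `intDegree`. -/
def StrictlyProper {a b : Type} (G : Matrix a b F) : Prop :=
  ∀ i j, G i j = 0 ∨ (G i j).intDegree < 0

/-- A matrix over `F` is proper if every entry has nonpositive `intDegree`. -/
def ProperM {a b : Type} (K : Matrix a b F) : Prop :=
  ∀ i j, (K i j).intDegree ≤ 0

/-- `K` stabilizes `G` if `I + G*K` is invertible and the four closed-loop
transfer matrices are stable. -/
def Stabilizes (Ω : Set ℂ) {m p : ℕ} (G : Matrix (Fin m) (Fin p) F)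
    (K : Matrix (Fin p) (Fin m) F) : Prop :=
  IsUnit (1 + G * K).det ∧
    MatStable Ω (1 + G * K)⁻¹ ∧
    MatStable Ω ((1 + G * K)⁻¹ * G) ∧
    MatStable Ω (K * (1 + G * K)⁻¹) ∧
    MatStable Ω (1 + K * G)⁻¹

/-- A doubly coprime factorization of `G` over `Ω`. -/
structure IsDCF (Ω : Set ℂ) {m p : ℕ} (G : Matrix (Fin m) (Fin p) F)
    (M : Matrix (Fin p) (Fin p) F) (N : Matrix (Fin m) (Fin p) F)
    (Mt : Matrix (Fin m) (Fin m) F) (Nt : Matrix (Fin m) (Fin p) F)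
    (X : Matrix (Fin p) (Fin m) F) (Y : Matrix (Fin p) (Fin p) F)
    (Xt : Matrix (Fin p) (Fin m) F) (Yt : Matrix (Fin m) (Fin m) F) : Prop where
  stM : MatStable Ω M
  stN : MatStable Ω N
  stMt : MatStable Ω Mt
  stNt : MatStable Ω Nt
  stX : MatStable Ω X
  stY : MatStable Ω Y
  stXt : MatStable Ω Xt
  stYt : MatStable Ω Yt
  hM : IsUnit M.det
  hMt : IsUnit Mt.det
  hLeft : G = Mt⁻¹ * Nt
  hRight : G = N * M⁻¹
  bezout : Matrix.fromBlocks Y X (-Nt) Mt * Matrix.fromBlocks M (-Xt) N Yt = 1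

/-- A left coprime factorization of `G` over `Ω`. -/
def IsLCF (Ω : Set ℂ) {m p : ℕ} (G : Matrix (Fin m) (Fin p) F)
    (Mt : Matrix (Fin m) (Fin m) F) (Nt : Matrix (Fin m) (Fin p) F) : Prop :=
  MatStable Ω Mt ∧ MatStable Ω Nt ∧ IsUnit Mt.det ∧ G = Mt⁻¹ * Nt ∧
    ∃ Xt : Matrix (Fin p) (Fin m) F, ∃ Yt : Matrix (Fin m) (Fin m) F,
      MatStable Ω Xt ∧ MatStable Ω Yt ∧ Nt * Xt + Mt * Yt = 1

/-- A right coprime factorization of `G` over `Ω`. -/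
def IsRCF (Ω : Set ℂ) {m p : ℕ} (G : Matrix (Fin m) (Fin p) F)
    (N : Matrix (Fin m) (Fin p) F) (M : Matrix (Fin p) (Fin p) F) : Prop :=
  MatStable Ω N ∧ MatStable Ω M ∧ IsUnit M.det ∧ G = N * M⁻¹ ∧
    ∃ X : Matrix (Fin p) (Fin m) F, ∃ Y : Matrix (Fin p) (Fin p) F,
      MatStable Ω X ∧ MatStable Ω Y ∧ Y * M + X * N = 1

/-- Evaluation of a rational function at a complex point (complexified num/denom). -/
def evalC (z : ℂ) (f : F) : ℂ :=
  (f.num.map (algebraMap ℝ ℂ)).eval z / (f.denom.map (algebraMap ℝ ℂ)).eval z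

namespace RatFunc

variable (K : Type*) [Field K]

def properSubring : Subring (RatFunc K) where
  carrier := {f | f.intDegree ≤ 0}
  mul_mem' {f g} hf hg := by
    by_cases hf0 : f = 0
    · simp [hf0]
    by_cases hg0 : g = 0
    · simp [hg0]
    exact (intDegree_mul hf0 hg0).trans_le (add_nonpos hf hg)
  one_mem' := by simp
  add_mem' {f g} hf hg := by
    by_cases hg0 : g = 0
    · simpa [hg0] using hf
    by_cases hfg : f + g = 0
    · simp [hfg]
    exact (intDegree_add_le hg0 hfg).trans (max_le hf hg)
  zero_mem' := by simp
  neg_mem' := by simp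

def strictlyProperIdeal : Ideal (properSubring K) where
  carrier := {f | (f : RatFunc K) = 0 ∨ (f : RatFunc K).intDegree < 0}
  add_mem' {f g} hf hg := by
    simp only [Set.mem_ofPred_eq, Subring.coe_add] at hf hg ⊢
    rcases hf with hf0 | hf
    · simpa [hf0] using hg
    rcases hg with hg0 | hg
    · simpa [hg0] using Or.inr hf
    by_cases hfg : (f : RatFunc K) + g = 0
    · exact Or.inl hfg
    have hg0 : (g : RatFunc K) ≠ 0 := by rintro h; simp [h] at hg
    exact Or.inr ((intDegree_add_le hg0 hfg).trans_lt (max_lt hf hg))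
  zero_mem' := Or.inl rfl
  smul_mem' c f hf := by
    simp only [Set.mem_ofPred_eq, smul_eq_mul, Subring.coe_mul] at hf ⊢
    by_cases hc0 : (c : RatFunc K) = 0
    · simp [hc0]
    rcases hf with hf0 | hf
    · simp [hf0]
    by_cases hf0 : (f : RatFunc K) = 0
    · simp [hf0]
    exact Or.inr ((intDegree_mul hc0 hf0).trans_lt (add_neg_of_nonpos_of_neg c.2 hf))

theorem strictlyProperIdeal_ne_top : strictlyProperIdeal K ≠ ⊤ :=
  (Ideal.ne_top_iff_one _).2 <| by simp [strictlyProperIdeal]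

variable {K}

theorem denom_neg_dvd (f : RatFunc K) : (-f).denom ∣ f.denom := by
  have h := denom_mul_dvd (C (-1)) f
  rwa [denom_C, one_mul, map_neg, map_one, neg_one_mul] at h

end RatFunc

def ComplexRootsIn (Ω : Set ℂ) (q : Polynomial ℝ) : Prop :=
  ∀ z : ℂ, (q.map (algebraMap ℝ ℂ)).IsRoot z → z ∈ Ω

theorem ComplexRootsIn.of_dvd {Ω : Set ℂ} {p q : Polynomial ℝ} (hq : ComplexRootsIn Ω q)
    (hpq : p ∣ q) : ComplexRootsIn Ω p :=
  fun z hz => hq z (hz.dvd (Polynomial.map_dvd _ hpq))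

theorem ComplexRootsIn.mul {Ω : Set ℂ} {p q : Polynomial ℝ} (hp : ComplexRootsIn Ω p)
    (hq : ComplexRootsIn Ω q) : ComplexRootsIn Ω (p * q) := fun z hz => by
  rw [Polynomial.map_mul] at hz
  exact (Polynomial.root_mul.1 hz).elim (hp z) (hq z)

def stableSubring (Ω : Set ℂ) : Subring F where
  carrier := {f | StableF Ω f}
  mul_mem' hf hg := ⟨mul_mem (s := RatFunc.properSubring ℝ) hf.1 hg.1,
    (ComplexRootsIn.mul hf.2 hg.2).of_dvd (RatFunc.denom_mul_dvd _ _)⟩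
  one_mem' := ⟨one_mem (RatFunc.properSubring ℝ), by simp⟩
  add_mem' hf hg := ⟨add_mem (s := RatFunc.properSubring ℝ) hf.1 hg.1,
    (ComplexRootsIn.mul hf.2 hg.2).of_dvd (RatFunc.denom_add_dvd _ _)⟩
  zero_mem' := ⟨zero_mem (RatFunc.properSubring ℝ), by simp⟩
  neg_mem' hf := ⟨neg_mem (s := RatFunc.properSubring ℝ) hf.1,
    ComplexRootsIn.of_dvd hf.2 (RatFunc.denom_neg_dvd _)⟩

section MatrixStability

variable {Ω : Set ℂ} {a b c : Type}

theorem MatStable.add {A B : Matrix a b F} (hA : MatStable Ω A) (hB : MatStable Ω B) :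
    MatStable Ω (A + B) :=
  fun i j => add_mem (s := stableSubring Ω) (hA i j) (hB i j)

theorem MatStable.sub {A B : Matrix a b F} (hA : MatStable Ω A) (hB : MatStable Ω B) :
    MatStable Ω (A - B) :=
  fun i j => show A i j - B i j ∈ stableSubring Ω from sub_mem (hA i j) (hB i j)

theorem MatStable.neg {A : Matrix a b F} (hA : MatStable Ω A) : MatStable Ω (-A) :=
  fun i j => neg_mem (s := stableSubring Ω) (hA i j)

theorem MatStable.one [DecidableEq a] : MatStable Ω (1 : Matrix a a F) := fun i j => by
  rw [one_apply]
  split_ifs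
  exacts [one_mem (stableSubring Ω), zero_mem (stableSubring Ω)]

theorem MatStable.mul [Fintype b] {A : Matrix a b F} {B : Matrix b c F} (hA : MatStable Ω A)
    (hB : MatStable Ω B) : MatStable Ω (A * B) :=
  fun i j => Subring.sum_mem (stableSubring Ω) fun k _ => mul_mem (hA i k) (hB k j)

theorem MatStable.properM {A : Matrix a b F} (hA : MatStable Ω A) : ProperM A :=
  fun i j => (hA i j).1

end MatrixStability

section Properness

variable {a b c : Type}

theorem StrictlyProper.properM {E : Matrix a b F} (hE : StrictlyProper E) : ProperM E :=
  fun i j => (hE i j).elim (fun h => by simp [h]) le_of_lt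

def ProperM.lift {A : Matrix a b F} (hA : ProperM A) : Matrix a b (RatFunc.properSubring ℝ) :=
  fun i j => ⟨A i j, hA i j⟩

theorem ProperM.map_lift {A : Matrix a b F} (hA : ProperM A) :
    hA.lift.map (RatFunc.properSubring ℝ).subtype = A :=
  rfl

theorem ProperM.mul_strictlyProper [Fintype b] {A : Matrix a b F} {B : Matrix b c F}
    (hA : ProperM A) (hB : StrictlyProper B) : StrictlyProper (A * B) := fun i j => by
  have hlift : (hA.lift * hB.properM.lift).map (RatFunc.properSubring ℝ).subtype = A * B := by
    rw [Matrix.map_mul, hA.map_lift, hB.properM.map_lift]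
  rw [← hlift]
  exact Ideal.sum_mem _ fun k _ => Ideal.mul_mem_left _ _
    (show hB.properM.lift k j ∈ RatFunc.strictlyProperIdeal ℝ from hB k j)

theorem StrictlyProper.isUnit_det_one_add [Fintype a] [DecidableEq a] {E : Matrix a a F}
    (hE : StrictlyProper E) : IsUnit (1 + E).det := by
  set I := RatFunc.strictlyProperIdeal ℝ
  have : Nontrivial (RatFunc.properSubring ℝ ⧸ I) :=
    Ideal.Quotient.nontrivial_iff.2 (RatFunc.strictlyProperIdeal_ne_top ℝ)
  have hres : Ideal.Quotient.mk I (1 + hE.properM.lift).det = 1 := by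
    have hzero : (Ideal.Quotient.mk I).mapMatrix hE.properM.lift = 0 := by
      ext i j
      exact Ideal.Quotient.eq_zero_iff_mem.2 (hE i j)
    rw [RingHom.map_det, map_add, map_one, hzero, add_zero, det_one]
  have hlift : 1 + E = (RatFunc.properSubring ℝ).subtype.mapMatrix (1 + hE.properM.lift) := by
    rw [map_add, map_one]
    rfl
  rw [hlift, ← RingHom.map_det, isUnit_iff_ne_zero]
  intro h
  rw [show (1 + hE.properM.lift).det = 0 from Subtype.ext h, map_zero] at hres
  exact zero_ne_one hres

end Properness

theorem Matrix.inv_mem_adjoin {𝕜 n : Type*} [Field 𝕜] [Fintype n] [DecidableEq n]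
    (A : Matrix n n 𝕜) : A⁻¹ ∈ Algebra.adjoin 𝕜 {A} := by
  by_cases hA : IsUnit A
  · have : IsArtinianRing (Algebra.adjoin 𝕜 {A}) := IsArtinianRing.of_finite 𝕜 _
    set a : Algebra.adjoin 𝕜 {A} := ⟨A, Algebra.self_mem_adjoin_singleton 𝕜 A⟩
    have ha : a ∈ nonZeroDivisors _ := mem_nonZeroDivisors_iff.2
      ⟨fun x hx => Subtype.ext (hA.mul_right_eq_zero.1 (congrArg Subtype.val hx)),
       fun x hx => Subtype.ext (hA.mul_left_eq_zero.1 (congrArg Subtype.val hx))⟩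
    obtain ⟨u, hu⟩ := IsArtinianRing.isUnit_of_mem_nonZeroDivisors ha
    have hinv : A * (↑u⁻¹ : Algebra.adjoin 𝕜 {A}) = 1 := by
      simpa [hu, a] using congrArg Subtype.val u.mul_inv
    rw [inv_eq_right_inv hinv]
    exact Subtype.prop _
  · rw [nonsing_inv_apply_not_isUnit _ ((isUnit_iff_isUnit_det A).not.1 hA)]
    exact zero_mem _

theorem Matrix.mul_inv_one_add_mul_mul {R m n : Type*} [CommRing R] [Fintype m] [Fintype n]
    [DecidableEq m] [DecidableEq n] {A : Matrix m n R} {B : Matrix n m R}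
    (h : IsUnit (1 + B * A).det) : A * (1 + B * A)⁻¹ * B = 1 - (1 + A * B)⁻¹ := by
  have h' : IsUnit (1 + A * B).det := by rwa [det_one_add_mul_comm]
  set T := (1 + A * B)⁻¹
  have hpush : (1 + A * B) * A = A * (1 + B * A) := by
    rw [Matrix.add_mul, Matrix.mul_add, Matrix.one_mul, Matrix.mul_one, Matrix.mul_assoc]
  calc A * (1 + B * A)⁻¹ * B = T * ((1 + A * B) * A) * (1 + B * A)⁻¹ * B := by
        rw [← Matrix.mul_assoc T, nonsing_inv_mul _ h', Matrix.one_mul]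
    _ = T * (A * B) := by
        simp only [hpush, Matrix.mul_assoc]
        rw [← Matrix.mul_assoc (1 + B * A), mul_nonsing_inv _ h, Matrix.one_mul]
    _ = 1 - T := by
        rw [eq_sub_iff_add_eq, ← mul_add_one, add_comm, nonsing_inv_mul _ h']

section QuadraticInvariance

def sparsitySubspace (R : Type*) [Semiring R] {ι κ : Type*} (Kbin : ι → κ → Bool) :
    Submodule R (Matrix ι κ R) where
  carrier := {K | ∀ i j, Kbin i j = false → K i j = 0}
  add_mem' hA hB i j h := by simp [hA i j h, hB i j h]
  zero_mem' _ _ _ := rfl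
  smul_mem' c A hA i j h := by simp [hA i j h]

variable {𝕜 ι κ : Type*} [Field 𝕜] [Fintype ι] [Fintype κ]

def IsQuadInvariant (S : Submodule 𝕜 (Matrix ι κ 𝕜)) (G : Matrix κ ι 𝕜) : Prop :=
  ∀ K ∈ S, K * G * K ∈ S

variable {S : Submodule 𝕜 (Matrix ι κ 𝕜)} {G : Matrix κ ι 𝕜}

theorem IsQuadInvariant.neg (hS : IsQuadInvariant S G) : IsQuadInvariant S (-G) :=
  fun K hK => by simpa [Matrix.mul_neg, Matrix.neg_mul] using neg_mem (hS K hK)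

theorem IsQuadInvariant.mul_pow_mem [DecidableEq κ] [NeZero (2 : 𝕜)] (hS : IsQuadInvariant S G)
    {W : Matrix ι κ 𝕜} (hW : W ∈ S) (n : ℕ) : W * (G * W) ^ n ∈ S := by
  induction n with
  | zero => simpa using hW
  | succ n ih =>
    set A := W * (G * W) ^ n
    -- polarization: both cross terms of `(W + A) G (W + A)` equal `W (G W)^(n+1)`
    have hpol :
        (W + A) * G * (W + A) = W * G * W + A * G * A + (W * G * A + A * G * W) := by
      simp only [Matrix.add_mul, Matrix.mul_add]
      abel
    have h1 : W * G * A = W * (G * W) ^ (n + 1) := by simp only [A, pow_succ', Matrix.mul_assoc]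
    have h2 : A * G * W = W * (G * W) ^ (n + 1) := by simp only [A, pow_succ, Matrix.mul_assoc]
    have h := hS _ (add_mem hW ih)
    rwa [hpol, h1, h2, ← two_smul 𝕜,
      Submodule.add_mem_iff_right _ (add_mem (hS W hW) (hS A ih)),
      Submodule.smul_mem_iff _ two_ne_zero] at h

theorem IsQuadInvariant.mul_mem_of_mem_adjoin [DecidableEq κ] [NeZero (2 : 𝕜)]
    (hS : IsQuadInvariant S G) {W : Matrix ι κ 𝕜} (hW : W ∈ S) {B : Matrix κ κ 𝕜}
    (hB : B ∈ Algebra.adjoin 𝕜 {G * W}) :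
    W * B ∈ S := by
  rw [Algebra.adjoin_singleton_eq_range_aeval, AlgHom.mem_range] at hB
  obtain ⟨q, rfl⟩ := hB
  induction q using Polynomial.induction_on' with
  | add p q hp hq => rw [map_add, Matrix.mul_add]; exact add_mem hp hq
  | monomial n c =>
    rw [Polynomial.aeval_monomial, Algebra.algebraMap_eq_smul_one, smul_mul_assoc, one_mul,
      Matrix.mul_smul]
    exact S.smul_mem c (hS.mul_pow_mem hW n)

theorem IsQuadInvariant.mul_inv_one_add_mem [DecidableEq κ] [NeZero (2 : 𝕜)]
    (hS : IsQuadInvariant S G) {W : Matrix ι κ 𝕜} (hW : W ∈ S) :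
    W * (1 + G * W)⁻¹ ∈ S :=
  hS.mul_mem_of_mem_adjoin hW <| Algebra.adjoin_le (Set.singleton_subset_iff.2
    (add_mem (one_mem _) (Algebra.self_mem_adjoin_singleton 𝕜 _))) (1 + G * W).inv_mem_adjoin

theorem IsQuadInvariant.mem_iff_mul_inv_one_add_mem [DecidableEq κ] [NeZero (2 : 𝕜)]
    (hS : IsQuadInvariant S G) {K : Matrix ι κ 𝕜} (hK : IsUnit (1 + G * K).det) :
    K ∈ S ↔ K * (1 + G * K)⁻¹ ∈ S := by
  refine ⟨hS.mul_inv_one_add_mem, fun hR => ?_⟩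
  -- `K` is recovered from `R = K (1 + G K)⁻¹` as `R (1 - G R)⁻¹`
  have hfeedback : 1 + -G * (K * (1 + G * K)⁻¹) = (1 + G * K)⁻¹ := by
    have h := mul_nonsing_inv _ hK
    rw [Matrix.add_mul, Matrix.one_mul, Matrix.mul_assoc] at h
    rw [Matrix.neg_mul, ← sub_eq_add_neg, sub_eq_iff_eq_add, h]
  have h := hS.neg.mul_inv_one_add_mem hR
  rwa [hfeedback, nonsing_inv_nonsing_inv _ hK, Matrix.mul_assoc, nonsing_inv_mul _ hK,
    Matrix.mul_one] at h

end QuadraticInvariance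

namespace IsDCF

variable {Ω : Set ℂ} {m p : ℕ} {G : Matrix (Fin m) (Fin p) F}
  {M : Matrix (Fin p) (Fin p) F} {N : Matrix (Fin m) (Fin p) F}
  {Mt : Matrix (Fin m) (Fin m) F} {Nt : Matrix (Fin m) (Fin p) F}
  {X : Matrix (Fin p) (Fin m) F} {Y : Matrix (Fin p) (Fin p) F}
  {Xt : Matrix (Fin p) (Fin m) F} {Yt : Matrix (Fin m) (Fin m) F}

theorem youlaShift (D : IsDCF Ω G M N Mt Nt X Y Xt Yt) {Q : Matrix (Fin p) (Fin m) F}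
    (hQ : MatStable Ω Q) :
    IsDCF Ω G M N Mt Nt (X + Q * Mt) (Y - Q * Nt) (Xt + M * Q) (Yt - N * Q) where
  stM := D.stM
  stN := D.stN
  stMt := D.stMt
  stNt := D.stNt
  stX := D.stX.add (hQ.mul D.stMt)
  stY := D.stY.sub (hQ.mul D.stNt)
  stXt := D.stXt.add (D.stM.mul hQ)
  stYt := D.stYt.sub (D.stN.mul hQ)
  hM := D.hM
  hMt := D.hMt
  hLeft := D.hLeft
  hRight := D.hRight
  bezout := by
    have hL : fromBlocks (Y - Q * Nt) (X + Q * Mt) (-Nt) Mt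
        = fromBlocks 1 Q 0 1 * fromBlocks Y X (-Nt) Mt := by
      rw [fromBlocks_multiply]
      simp [sub_eq_add_neg]
    have hR : fromBlocks M (-(Xt + M * Q)) N (Yt - N * Q)
        = fromBlocks M (-Xt) N Yt * fromBlocks 1 (-Q) 0 1 := by
      rw [fromBlocks_multiply]
      simp [sub_eq_add_neg, add_comm]
    rw [hL, hR, Matrix.mul_assoc, ← Matrix.mul_assoc (fromBlocks Y X (-Nt) Mt), D.bezout,
      Matrix.one_mul, fromBlocks_multiply]
    simp [fromBlocks_one]

theorem Mt_mul_G (D : IsDCF Ω G M N Mt Nt X Y Xt Yt) : Mt * G = Nt := by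
  rw [D.hLeft, ← Matrix.mul_assoc, mul_nonsing_inv _ D.hMt, Matrix.one_mul]

theorem G_mul_M (D : IsDCF Ω G M N Mt Nt X Y Xt Yt) : G * M = N := by
  rw [D.hRight, Matrix.mul_assoc, nonsing_inv_mul _ D.hM, Matrix.mul_one]

theorem bezout_blocks (D : IsDCF Ω G M N Mt Nt X Y Xt Yt) :
    Y * M + X * N = 1 ∧ X * Yt = Y * Xt ∧ Nt * Xt + Mt * Yt = 1 := by
  have h := D.bezout
  rw [fromBlocks_multiply, ← fromBlocks_one, fromBlocks_inj] at h
  obtain ⟨h11, h12, -, h22⟩ := h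
  rw [Matrix.mul_neg, neg_add_eq_zero] at h12
  rw [Matrix.neg_mul, Matrix.mul_neg, neg_neg] at h22
  exact ⟨h11, h12.symm, h22⟩

theorem inv_M (D : IsDCF Ω G M N Mt Nt X Y Xt Yt) : M⁻¹ = Y + X * G := by
  apply inv_eq_left_inv
  rw [Matrix.add_mul, Matrix.mul_assoc, D.G_mul_M, D.bezout_blocks.1]

theorem inv_Mt (D : IsDCF Ω G M N Mt Nt X Y Xt Yt) : Mt⁻¹ = G * Xt + Yt := by
  apply inv_eq_right_inv
  rw [Matrix.mul_add, ← Matrix.mul_assoc, D.Mt_mul_G, D.bezout_blocks.2.2]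

theorem isUnit_det_Y (D : IsDCF Ω G M N Mt Nt X Y Xt Yt) (hG : StrictlyProper G) :
    IsUnit Y.det := by
  have hMY : M * Y = 1 + -(M * X) * G := by
    rw [eq_sub_of_add_eq D.inv_M.symm, Matrix.mul_sub, mul_nonsing_inv _ D.hM, Matrix.neg_mul,
      Matrix.mul_assoc, sub_eq_add_neg]
  have h := (D.stM.mul D.stX).neg.properM.mul_strictlyProper hG |>.isUnit_det_one_add
  rw [← hMY, det_mul] at h
  exact isUnit_of_mul_isUnit_right h

theorem controller_mul_Yt (D : IsDCF Ω G M N Mt Nt X Y Xt Yt) (hY : IsUnit Y.det) :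
    Y⁻¹ * X * Yt = Xt := by
  rw [Matrix.mul_assoc, D.bezout_blocks.2.1, ← Matrix.mul_assoc, nonsing_inv_mul _ hY,
    Matrix.one_mul]

theorem one_add_G_mul_controller_mul (D : IsDCF Ω G M N Mt Nt X Y Xt Yt) (hY : IsUnit Y.det) :
    (1 + G * (Y⁻¹ * X)) * (Yt * Mt) = 1 := by
  rw [← Matrix.mul_assoc, Matrix.add_mul, Matrix.one_mul, Matrix.mul_assoc G,
    D.controller_mul_Yt hY, add_comm, ← D.inv_Mt, nonsing_inv_mul _ D.hMt]

theorem controller_mul_inv (D : IsDCF Ω G M N Mt Nt X Y Xt Yt) (hY : IsUnit Y.det) :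
    Y⁻¹ * X * (1 + G * (Y⁻¹ * X))⁻¹ = Xt * Mt := by
  rw [inv_eq_right_inv (D.one_add_G_mul_controller_mul hY), ← Matrix.mul_assoc,
    D.controller_mul_Yt hY]

theorem inv_one_add_controller_mul_G (D : IsDCF Ω G M N Mt Nt X Y Xt Yt) (hY : IsUnit Y.det) :
    (1 + Y⁻¹ * X * G)⁻¹ = M * Y := by
  apply inv_eq_left_inv
  rw [Matrix.mul_assoc, Matrix.mul_add, Matrix.mul_one, ← Matrix.mul_assoc Y,
    ← Matrix.mul_assoc Y, mul_nonsing_inv _ hY, Matrix.one_mul, ← D.inv_M,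
    mul_nonsing_inv _ D.hM]

theorem stabilizes (D : IsDCF Ω G M N Mt Nt X Y Xt Yt) (hY : IsUnit Y.det) :
    Stabilizes Ω G (Y⁻¹ * X) := by
  have h := D.one_add_G_mul_controller_mul hY
  refine ⟨isUnit_det_of_right_inverse h, ?_, ?_, ?_, ?_⟩
  · rw [inv_eq_right_inv h]
    exact D.stYt.mul D.stMt
  · rw [inv_eq_right_inv h, Matrix.mul_assoc, D.Mt_mul_G]
    exact D.stYt.mul D.stNt
  · rw [D.controller_mul_inv hY]
    exact D.stXt.mul D.stMt
  · rw [D.inv_one_add_controller_mul_G hY]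
    exact D.stM.mul D.stY

theorem exists_stable_youla (D : IsDCF Ω G M N Mt Nt X Y Xt Yt) (hG : StrictlyProper G)
    {K : Matrix (Fin p) (Fin m) F} (hK : Stabilizes Ω G K) :
    ∃ Q : Matrix (Fin p) (Fin m) F, MatStable Ω Q ∧ K = (Y - Q * Nt)⁻¹ * (X + Q * Mt) := by
  obtain ⟨hdet, hS, hSG, hKS, hT⟩ := hK
  have hKSG : MatStable Ω (K * (1 + G * K)⁻¹ * G) := by
    rw [mul_inv_one_add_mul_mul hdet]
    exact MatStable.one.sub hT
  have hSMt : MatStable Ω ((1 + G * K)⁻¹ * Mt⁻¹) := by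
    rw [D.inv_Mt, Matrix.mul_add, ← Matrix.mul_assoc]
    exact (hSG.mul D.stXt).add (hS.mul D.stYt)
  have hKSMt : MatStable Ω (K * (1 + G * K)⁻¹ * Mt⁻¹) := by
    rw [D.inv_Mt, Matrix.mul_add, ← Matrix.mul_assoc]
    exact (hKSG.mul D.stXt).add (hKS.mul D.stYt)
  set Q := (Y * K - X) * (1 + G * K)⁻¹ * Mt⁻¹
  have hQ : MatStable Ω Q := by
    have hQ' : Q = Y * (K * (1 + G * K)⁻¹ * Mt⁻¹) - X * ((1 + G * K)⁻¹ * Mt⁻¹) := by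
      simp only [Q, Matrix.sub_mul, Matrix.mul_assoc]
    rw [hQ']
    exact (D.stY.mul hKSMt).sub (D.stX.mul hSMt)
  refine ⟨Q, hQ, ?_⟩
  have hQMtGK : Q * Mt * G * K = Y * K - X - Q * Mt := by
    have hQMt : Q * Mt * (1 + G * K) = Y * K - X := by
      simp only [Q, Matrix.mul_assoc, nonsing_inv_mul _ D.hMt,
        nonsing_inv_mul _ hdet, Matrix.mul_one]
    rw [← hQMt]
    simp only [Matrix.mul_add, Matrix.mul_one, Matrix.mul_assoc]
    abel
  have hYK : (Y - Q * Nt) * K = X + Q * Mt := by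
    rw [← D.Mt_mul_G, Matrix.sub_mul, ← Matrix.mul_assoc Q, hQMtGK]
    abel
  rw [← hYK, ← Matrix.mul_assoc, nonsing_inv_mul _ ((D.youlaShift hQ).isUnit_det_Y hG),
    Matrix.one_mul]

end IsDCF

/-- **Corollary 1 (Youla-like parametrization of all sparse stabilizing controllers).**
If `Q₀` is a stable solution of the model-matching problem, then `K` stabilizes `G` and lies in
`S` iff `K = K_{Q₀+Q_δ}` for some stable `Q_δ` with `vec(Q_δ) ∈ Null(Φ(Mᵀ⊗M̃))`, i.e.
`(M·Q_δ·M̃) i j = 0` whenever `Kbin i j = false`. -/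
theorem youla_like_sparse_parametrization (Ω : Set ℂ) (m p : ℕ)
    (G : Matrix (Fin m) (Fin p) F) (hG : StrictlyProper G)
    (M : Matrix (Fin p) (Fin p) F) (N : Matrix (Fin m) (Fin p) F)
    (Mt : Matrix (Fin m) (Fin m) F) (Nt : Matrix (Fin m) (Fin p) F)
    (X : Matrix (Fin p) (Fin m) F) (Y : Matrix (Fin p) (Fin p) F)
    (Xt : Matrix (Fin p) (Fin m) F) (Yt : Matrix (Fin m) (Fin m) F)
    (hDCF : IsDCF Ω G M N Mt Nt X Y Xt Yt)
    (Kbin : Fin p → Fin m → Bool)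
    (hQI : ∀ K : Matrix (Fin p) (Fin m) F,
      (∀ i j, Kbin i j = false → K i j = 0) →
      (∀ i j, Kbin i j = false → (K * G * K) i j = 0))
    (Q₀ : Matrix (Fin p) (Fin m) F) (hQ₀stable : MatStable Ω Q₀)
    (hQ₀ : ∀ i j, Kbin i j = false → (Xt * Mt + M * Q₀ * Mt) i j = 0)
    (K : Matrix (Fin p) (Fin m) F) :
    (Stabilizes Ω G K ∧ (∀ i j, Kbin i j = false → K i j = 0)) ↔
    (∃ Qδ : Matrix (Fin p) (Fin m) F, MatStable Ω Qδ ∧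
      (∀ i j, Kbin i j = false → (M * Qδ * Mt) i j = 0) ∧
      K = (Y - (Q₀ + Qδ) * Nt)⁻¹ * (X + (Q₀ + Qδ) * Mt)) := by
  have hQI' : IsQuadInvariant (sparsitySubspace F Kbin) G := hQI
  have hYQ : ∀ Q, MatStable Ω Q → IsUnit (Y - Q * Nt).det :=
    fun Q hQ => (hDCF.youlaShift hQ).isUnit_det_Y hG
  have hsplit : ∀ Qδ, (Xt + M * (Q₀ + Qδ)) * Mt = (Xt * Mt + M * Q₀ * Mt) + M * Qδ * Mt :=
    fun Qδ => by simp only [Matrix.mul_add, Matrix.add_mul, add_assoc]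
  have hS₀ : Xt * Mt + M * Q₀ * Mt ∈ sparsitySubspace F Kbin := hQ₀
  constructor
  · rintro ⟨hK, hKS⟩
    obtain ⟨Q, hQ, rfl⟩ := hDCF.exists_stable_youla hG hK
    refine ⟨Q - Q₀, hQ.sub hQ₀stable, ?_, by rw [add_sub_cancel]⟩
    have h := (hQI'.mem_iff_mul_inv_one_add_mem hK.1).1 hKS
    rwa [(hDCF.youlaShift hQ).controller_mul_inv (hYQ Q hQ), ← add_sub_cancel Q₀ Q, hsplit,
      Submodule.add_mem_iff_right _ hS₀] at h
  · rintro ⟨Qδ, hQδ, hS, rfl⟩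
    have hQ := hQ₀stable.add hQδ
    have hstab := (hDCF.youlaShift hQ).stabilizes (hYQ _ hQ)
    refine ⟨hstab, (hQI'.mem_iff_mul_inv_one_add_mem hstab.1).2 ?_⟩
    rw [(hDCF.youlaShift hQ).controller_mul_inv (hYQ _ hQ), hsplit]
    exact add_mem hS₀ hS
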